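/- arXiv:2010.08049 — 7 statements merged into one kernel-verified Lean document; each statement's English description precedes it below -/
import Mathlib

section
/- If A and B are subgroups of the additive group of real numbers and h : A → B is a group homomorphism that is strictly order preserving (with respect to the order inherited from ℝ), then there exists a positive real number λ such that h(a) = λ·a for every a ∈ A. -/
/-!
Compare a strictly order preserving `ψ` with `φ` on rational multiples: for `0 < φ x` and
`q = m / n`, the inequality `φ y < q * φ x` says `φ (n • y) < φ (m • x)`, which `ψ` preserves,
so every rational above `φ y / φ x` is above `ψ y / ψ x`. Applied to `y` and `-y`, the two ratios
coincide, and `ψ` is `φ` scaled by `ψ x / φ x > 0`.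
-/

namespace AddMonoidHom

variable {G : Type*} [AddGroup G] {φ ψ : G →+ ℝ}

theorem pos_of_lt_imp_lt (hmono : ∀ x y, φ x < φ y → ψ x < ψ y) {x : G} (hx : 0 < φ x) :
    0 < ψ x := by
  simpa using hmono 0 x (by simpa using hx)

theorem div_le_div_of_lt_imp_lt (hmono : ∀ x y, φ x < φ y → ψ x < ψ y) {x : G}
    (hx : 0 < φ x) (y : G) : ψ y / ψ x ≤ φ y / φ x := by
  have hψx := pos_of_lt_imp_lt hmono hx
  refine le_of_forall_lt_rat_imp_le fun q hq => ?_
  have hden : (0 : ℝ) < q.den := by exact_mod_cast q.den_pos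
  have hq_eq : (q : ℝ) = q.num / q.den := by exact_mod_cast q.num_div_den.symm
  rw [hq_eq, div_lt_div_iff₀ hx hden] at hq
  have hφ : φ ((q.den : ℤ) • y) < φ (q.num • x) := by
    simp only [map_zsmul, zsmul_eq_mul, Int.cast_natCast]
    linarith
  have hψ := hmono _ _ hφ
  simp only [map_zsmul, zsmul_eq_mul, Int.cast_natCast] at hψ
  rw [hq_eq, div_le_div_iff₀ hψx hden]
  linarith

theorem eq_div_mul_of_lt_imp_lt (hmono : ∀ x y, φ x < φ y → ψ x < ψ y) {x : G}
    (hx : 0 < φ x) (y : G) : ψ y = ψ x / φ x * φ y := by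
  have hψx := pos_of_lt_imp_lt hmono hx
  have hle := div_le_div_of_lt_imp_lt hmono hx y
  have hge := div_le_div_of_lt_imp_lt hmono hx (-y)
  simp only [map_neg, neg_div, neg_le_neg_iff] at hge
  have hratio : ψ y / ψ x = φ y / φ x := le_antisymm hle hge
  field_simp at hratio ⊢
  linarith

end AddMonoidHom

/-- Hion's Lemma: every strictly order preserving group homomorphism between
additive subgroups of `ℝ` is multiplication by a positive scalar. -/
theorem stmt_0 (A B : AddSubgroup ℝ) (h : A → B)
    (hadd : ∀ a b : A, h (a + b) = h a + h b)
    (hmono : ∀ a b : A, (a : ℝ) < (b : ℝ) → (h a : ℝ) < (h b : ℝ)) :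
    ∃ l : ℝ, 0 < l ∧ ∀ a : A, (h a : ℝ) = l * (a : ℝ) := by
  let ψ : A →+ ℝ := B.subtype.comp (AddMonoidHom.mk' h hadd)
  have hψ : ∀ a b, A.subtype a < A.subtype b → ψ a < ψ b := hmono
  by_cases hpos : ∃ x : A, 0 < (x : ℝ)
  · obtain ⟨x, hx⟩ := hpos
    exact ⟨ψ x / x, div_pos (AddMonoidHom.pos_of_lt_imp_lt hψ hx) hx,
      AddMonoidHom.eq_div_mul_of_lt_imp_lt hψ hx⟩
  · have hA : ∀ a : A, a = 0 := fun a => by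
      push Not at hpos
      exact Subtype.ext (le_antisymm (hpos a) (by simpa using hpos (-a)))
    refine ⟨1, one_pos, fun a => ?_⟩
    rw [hA a]
    simpa [ψ] using ψ.map_zero
end

section
/- Let A and B be subfields of ℝ. Then A ⊆ B if and only if there exists a strictly order preserving additive group homomorphism h : A → B. In particular, A and B are order isomorphic as ordered additive groups if and only if A = B. -/
/-!
Hion's lemma: a strictly order-preserving additive map `f` from a subfield `K` of `ℝ` to `ℝ` is
multiplication by `λ = f 1 > 0`. Indeed `f q = q λ` for rational `q`, and strict monotonicity
gives `q < x ↔ q λ < f x`, so `x` and `f x / λ` have the same rational lower cuts.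
If `f` takes values in a subfield `B`, then `λ ∈ B` and so every `x = f x / λ` lies in `B`.
-/

theorem Subfield.map_eq_mul_of_strictMono {K : Subfield ℝ} (f : K →+ ℝ) (hf : StrictMono f)
    (x : K) : f x = f 1 * x := by
  have hf1 : 0 < f 1 := by simpa using hf zero_lt_one
  have map_rat (q : ℚ) : f q = q * f 1 := by
    rw [← Rat.smul_one_eq_cast, map_rat_smul, Rat.smul_def]
  suffices (x : ℝ) = f x / f 1 by rw [this, mul_div_cancel₀ _ hf1.ne']
  refine eq_of_forall_rat_lt_iff_lt fun q => ?_
  rw [lt_div_iff₀ hf1, ← map_rat, hf.lt_iff_lt, ← Subtype.coe_lt_coe]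
  simp

theorem Subfield.le_of_strictMono_addMonoidHom {A B : Subfield ℝ} (f : A →+ B)
    (hf : StrictMono fun a => (f a : ℝ)) : A ≤ B := by
  intro x hx
  have hf1 : (f 1 : ℝ) ≠ 0 := by simpa using (hf zero_lt_one).ne'
  have hx_eq : x = f ⟨x, hx⟩ / f 1 := by
    have hf_mul := Subfield.map_eq_mul_of_strictMono (B.subtype.toAddMonoidHom.comp f) hf ⟨x, hx⟩
    simp only [RingHom.toAddMonoidHom_eq_coe, AddMonoidHom.coe_comp, AddMonoidHom.coe_coe,
      coe_subtype, Function.comp_apply] at hf_mul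
    rw [hf_mul, mul_div_cancel_left₀ _ hf1]
  exact hx_eq ▸ B.div_mem (f _).2 (f 1).2

/-- For subfields `A`, `B` of `ℝ`: `A ⊆ B` iff there is a strictly order
preserving additive homomorphism `A → B`; and `A`, `B` are order isomorphic
as ordered additive groups iff `A = B`. -/
theorem stmt_3 (A B : Subfield ℝ) :
    ((A : Set ℝ) ⊆ (B : Set ℝ) ↔
      ∃ h : A → B, (∀ a b : A, h (a + b) = h a + h b) ∧
        ∀ a b : A, (a : ℝ) < (b : ℝ) → (h a : ℝ) < (h b : ℝ)) ∧
    ((∃ f : A ≃+ B, ∀ x y : A, (x : ℝ) < (y : ℝ) ↔ (f x : ℝ) < (f y : ℝ)) ↔ A = B) := by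
  refine ⟨⟨fun hAB => ?_, fun ⟨h, hadd, hmono⟩ => ?_⟩, ⟨fun ⟨f, hf⟩ => ?_, ?_⟩⟩
  · exact ⟨Subfield.inclusion hAB, fun _ _ => rfl, fun _ _ hab => hab⟩
  · exact Subfield.le_of_strictMono_addMonoidHom (AddMonoidHom.mk' h hadd) hmono
  · refine le_antisymm (Subfield.le_of_strictMono_addMonoidHom f fun x y => (hf x y).1) ?_
    refine Subfield.le_of_strictMono_addMonoidHom f.symm fun x y hxy => ?_
    simpa [hf] using hxy
  · rintro rfl
    exact ⟨AddEquiv.refl A, fun _ _ => Iff.rfl⟩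
end

section
/- For a nontrivial subgroup G of the additive reals and a nonzero real r, define G/r = { g/r : g ∈ G }, and let A_G = { G/r : r ∈ G, r ≠ 0 }. Then for nontrivial subgroups G, H ≤ ℝ: G and H are order isomorphic (as ordered additive groups) if and only if A_G = A_H. -/
/-!
Hion's lemma: for a monotone additive map `φ` from a subgroup of `ℝ` to `ℝ`, the additive
defect `a ↦ φ(a) b - φ(b) a` is bounded above by `φ(b) b` (compare `a` with the integer
multiples of `b`), so it vanishes. Hence an order isomorphism `f : G ≃+ H` satisfies
`G/r = H/f(r)`, and `A_G = A_H`. Conversely, an equality `G/r = H/s` exhibits `H` as `G`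
rescaled by `s/r`, and both may be taken positive because `G/(-r) = G/r`.
-/

/-- `G/r = { g/r : g ∈ G }`. -/
def divSet (G : AddSubgroup ℝ) (r : ℝ) : Set ℝ := {x | ∃ g ∈ G, x = g / r}

/-- The invariant `A_G = { G/r : r ∈ G, r ≠ 0 }`. -/
def AInv (G : AddSubgroup ℝ) : Set (Set ℝ) := {S | ∃ r ∈ G, r ≠ 0 ∧ S = divSet G r}

namespace AddSubgroup

variable {G H : AddSubgroup ℝ}

lemma apply_mul_sub_apply_mul_le_of_monotone (φ : G →+ ℝ) (hφ : Monotone φ) {b : G}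
    (hb : 0 < (b : ℝ)) (a : G) : φ a * b - φ b * a ≤ φ b * b := by
  set m := ⌊(a : ℝ) / b⌋
  have hmb : (m : ℝ) * b ≤ a := (le_div_iff₀ hb).1 (Int.floor_le _)
  have ham : (a : ℝ) ≤ ((m + 1 : ℤ) : ℝ) * b := by
    push_cast
    exact ((div_lt_iff₀ hb).1 (Int.lt_floor_add_one _)).le
  have hφb : 0 ≤ φ b := by simpa using hφ (show (0 : G) ≤ b from hb.le)
  have hφa : φ a ≤ ((m + 1 : ℤ) : ℝ) * φ b := by
    rw [← zsmul_eq_mul, ← map_zsmul]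
    apply hφ
    rwa [← Subtype.coe_le_coe, coe_zsmul, zsmul_eq_mul]
  push_cast at hφa
  nlinarith [mul_le_mul_of_nonneg_right hφa hb.le, mul_le_mul_of_nonneg_left hmb hφb]

/-- Hion's lemma. -/
theorem apply_mul_eq_apply_mul_of_monotone (φ : G →+ ℝ) (hφ : Monotone φ) (a b : G) :
    φ a * b = φ b * a := by
  wlog hb : 0 < (b : ℝ) generalizing b
  · rcases (not_lt.1 hb).lt_or_eq with hb | hb
    · have := this (-b) (by simpa using hb)
      simp only [map_neg, coe_neg] at this
      linarith
    · have hb0 : b = 0 := Subtype.ext hb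
      simp [hb0]
  have hle : ∀ a : G, φ a * b - φ b * a ≤ 0 := by
    intro a
    by_contra! hpos
    obtain ⟨n, hn⟩ := exists_nat_gt (φ b * b / (φ a * b - φ b * a))
    have hna := apply_mul_sub_apply_mul_le_of_monotone φ hφ hb (n • a)
    rw [div_lt_iff₀ hpos] at hn
    simp only [map_nsmul, coe_nsmul, nsmul_eq_mul] at hna
    nlinarith
  have hneg := hle (-a)
  simp only [map_neg, coe_neg] at hneg
  linarith [hle a]

lemma div_mem_divSet_iff {r : ℝ} (hr : r ≠ 0) {x : ℝ} : x / r ∈ divSet G r ↔ x ∈ G :=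
  ⟨fun ⟨_, hg, hx⟩ => (div_left_inj' hr).1 hx ▸ hg, fun hx => ⟨x, hx, rfl⟩⟩

lemma divSet_neg (G : AddSubgroup ℝ) (r : ℝ) : divSet G (-r) = divSet G r := by
  ext x
  constructor <;> rintro ⟨g, hg, rfl⟩ <;> exact ⟨-g, G.neg_mem hg, by ring⟩

lemma divSet_abs (G : AddSubgroup ℝ) (r : ℝ) : divSet G |r| = divSet G r := by
  rcases abs_choice r with h | h <;> rw [h]
  exact divSet_neg G r

lemma divSet_eq_of_mul_comm (f : G ≃+ H) (hf : ∀ a b : G, (f a : ℝ) * b = f b * a) {r : G}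
    (hr : r ≠ 0) : divSet H (f r) = divSet G r := by
  have hfr : (f r : ℝ) ≠ 0 := by simpa using hr
  have hdiv : ∀ g : G, (f g : ℝ) / f r = g / r :=
    fun g => (div_eq_div_iff hfr (by simpa using hr)).2 <| (hf g r).trans (mul_comm _ _)
  ext x
  constructor
  · rintro ⟨h, hh, rfl⟩
    refine ⟨f.symm ⟨h, hh⟩, (f.symm _).2, ?_⟩
    rw [← hdiv, AddEquiv.apply_symm_apply]
  · rintro ⟨g, hg, rfl⟩
    exact ⟨f ⟨g, hg⟩, (f _).2, (hdiv ⟨g, hg⟩).symm⟩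

lemma mem_aInv_iff {S : Set ℝ} : S ∈ AInv G ↔ ∃ r : G, r ≠ 0 ∧ S = divSet G r :=
  ⟨fun ⟨r, hr, hr0, hS⟩ => ⟨⟨r, hr⟩, by simpa using hr0, hS⟩,
    fun ⟨r, hr0, hS⟩ => ⟨r, r.2, by simpa using hr0, hS⟩⟩

lemma aInv_eq_of_mul_comm (f : G ≃+ H) (hf : ∀ a b : G, (f a : ℝ) * b = f b * a) :
    AInv G = AInv H := by
  ext S
  simp only [mem_aInv_iff]
  constructor
  · rintro ⟨r, hr, rfl⟩
    exact ⟨f r, by simpa using hr, (divSet_eq_of_mul_comm f hf hr).symm⟩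
  · rintro ⟨s, hs, rfl⟩
    refine ⟨f.symm s, by simpa using hs, ?_⟩
    rw [← divSet_eq_of_mul_comm f hf (by simpa using hs), AddEquiv.apply_symm_apply]

lemma mem_iff_mul_mem_of_divSet_eq {r s : ℝ} (hr : r ≠ 0) (hs : s ≠ 0)
    (h : divSet G r = divSet H s) (x : ℝ) : x ∈ G ↔ s / r * x ∈ H := by
  calc x ∈ G ↔ x / r ∈ divSet G r := div_mem_divSet_iff hr |>.symm
    _ ↔ s / r * x / s ∈ divSet H s := by rw [h, show s / r * x / s = x / r by field_simp]
    _ ↔ s / r * x ∈ H := div_mem_divSet_iff hs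

lemma exists_strictMono_addEquiv_of_mem_iff {c : ℝ} (hc : 0 < c)
    (h : ∀ x, x ∈ G ↔ c * x ∈ H) :
    ∃ f : G ≃+ H, ∀ x y : G, (x : ℝ) < (y : ℝ) ↔ (f x : ℝ) < (f y : ℝ) :=
  ⟨{ toFun := fun x => ⟨c * x, (h x).1 x.2⟩
     invFun := fun y => ⟨y / c, (h _).2 (by rw [mul_div_cancel₀ _ hc.ne']; exact y.2)⟩
     left_inv := fun x => Subtype.ext (mul_div_cancel_left₀ _ hc.ne')
     right_inv := fun y => Subtype.ext (mul_div_cancel₀ _ hc.ne')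
     map_add' := fun x y => Subtype.ext (mul_add _ _ _) },
    fun x y => (mul_lt_mul_iff_right₀ hc).symm⟩

end AddSubgroup

theorem stmt_4_general (G H : AddSubgroup ℝ) (hG : G ≠ ⊥) :
    (∃ f : G ≃+ H, ∀ x y : G, (x : ℝ) < (y : ℝ) ↔ (f x : ℝ) < (f y : ℝ)) ↔
      AInv G = AInv H := by
  constructor
  · rintro ⟨f, hf⟩
    have hmono : Monotone (H.subtype.comp f.toAddMonoidHom) :=
      StrictMono.monotone fun x y hxy => (hf x y).1 hxy
    exact AddSubgroup.aInv_eq_of_mul_comm f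
      (AddSubgroup.apply_mul_eq_apply_mul_of_monotone _ hmono)
  · intro hA
    obtain ⟨r, hr⟩ : ∃ r : G, (0 : ℝ) < r :=
      haveI := (AddSubgroup.nontrivial_iff_ne_bot G).2 hG
      exists_zero_lt
    obtain ⟨s, -, hs, hrs⟩ : divSet G r ∈ AInv H := hA ▸ ⟨r, r.2, hr.ne', rfl⟩
    rw [← AddSubgroup.divSet_abs H] at hrs
    exact AddSubgroup.exists_strictMono_addEquiv_of_mem_iff (div_pos (abs_pos.2 hs) hr)
      (AddSubgroup.mem_iff_mul_mem_of_divSet_eq hr.ne' (abs_ne_zero.2 hs) hrs)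

/-- Nontrivial subgroups `G, H ≤ ℝ` are order isomorphic iff `A_G = A_H`. -/
theorem stmt_4 (G H : AddSubgroup ℝ) (hG : G ≠ ⊥) (hH : H ≠ ⊥) :
    (∃ f : G ≃+ H, ∀ x y : G, (x : ℝ) < (y : ℝ) ↔ (f x : ℝ) < (f y : ℝ)) ↔
      AInv G = AInv H :=
  stmt_4_general G H hG
end

section
/- Let G and H be subgroups of the additive reals. There exists a strictly order preserving group homomorphism from G to H if and only if for every X ∈ A_G there exists Y ∈ A_H with X ⊆ Y, where A_G = { G/r : r ∈ G \ {0} } and A_H = { H/s : s ∈ H \ {0} }. -/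
lemma divSet_neg (G : AddSubgroup ℝ) (r : ℝ) : divSet G (-r) = divSet G r := by
  ext x
  constructor
  · rintro ⟨g, hg, rfl⟩
    exact ⟨-g, G.neg_mem hg, by rw [neg_div, div_neg]⟩
  · rintro ⟨g, hg, rfl⟩
    exact ⟨-g, G.neg_mem hg, by rw [neg_div_neg_eq]⟩

lemma divSet_abs (G : AddSubgroup ℝ) (r : ℝ) : divSet G |r| = divSet G r := by
  rcases abs_choice r with h | h <;> rw [h]
  exact divSet_neg G r

lemma mem_AInv_iff_pos {G : AddSubgroup ℝ} {S : Set ℝ} :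
    S ∈ AInv G ↔ ∃ r ∈ G, 0 < r ∧ S = divSet G r := by
  constructor
  · rintro ⟨r, hrG, hr0, rfl⟩
    exact ⟨|r|, abs_mem_iff.mpr hrG, abs_pos.mpr hr0, (divSet_abs G r).symm⟩
  · rintro ⟨r, hrG, hr, rfl⟩
    exact ⟨r, hrG, hr.ne', rfl⟩

section Hion

variable {G : AddSubgroup ℝ} {ψ : G →+ ℝ}

lemma rat_lt_div_iff_of_strictMono (hψ : StrictMono ψ) {r : G} (hr : (0 : ℝ) < r)
    (g : G) (q : ℚ) : (q : ℝ) < g / r ↔ (q : ℝ) < ψ g / ψ r := by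
  have hψr : 0 < ψ r := by simpa using hψ (show (0 : G) < r from hr)
  have hden : (0 : ℝ) < q.den := by positivity
  have hsmul : q.num • r < (q.den : ℤ) • g ↔ q.num • ψ r < (q.den : ℤ) • ψ g := by
    rw [← map_zsmul, ← map_zsmul, hψ.lt_iff_lt]
  rw [← Subtype.coe_lt_coe] at hsmul
  simp only [AddSubgroup.coe_zsmul, zsmul_eq_mul, Int.cast_natCast] at hsmul
  rw [Rat.cast_def, div_lt_div_iff₀ hden hr, div_lt_div_iff₀ hden hψr,
    mul_comm (g : ℝ), mul_comm (ψ g)]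
  exact hsmul

/-- Hion's lemma. -/
lemma div_eq_div_of_strictMono (hψ : StrictMono ψ) {r : G} (hr : (0 : ℝ) < r) (g : G) :
    (g : ℝ) / r = ψ g / ψ r :=
  eq_of_forall_rat_lt_iff_lt (rat_lt_div_iff_of_strictMono hψ hr g)

end Hion

lemma divSet_subset_of_strictMono {G H : AddSubgroup ℝ} {ψ : G →+ H}
    (hψ : StrictMono ψ) {r : G} (hr : (0 : ℝ) < r) : divSet G r ⊆ divSet H (ψ r) := by
  rintro x ⟨g, hg, rfl⟩
  exact ⟨ψ ⟨g, hg⟩, (ψ ⟨g, hg⟩).2,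
    div_eq_div_of_strictMono (ψ := H.subtype.comp ψ) (fun _ _ h => hψ h) hr ⟨g, hg⟩⟩

lemma mul_div_mem_of_divSet_subset {G H : AddSubgroup ℝ} {r s : ℝ} (hs : s ≠ 0)
    (hsub : divSet G r ⊆ divSet H s) {g : ℝ} (hg : g ∈ G) : g * (s / r) ∈ H := by
  obtain ⟨h, hh, hgh⟩ := hsub ⟨g, hg, rfl⟩
  have : h = g * (s / r) := by
    rw [eq_div_iff hs] at hgh
    rw [← hgh]
    ring
  exact this ▸ hh

theorem stmt_5_general (G H : AddSubgroup ℝ) (hG : G ≠ ⊥) :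
    (∃ φ : G → H, (∀ a b : G, φ (a + b) = φ a + φ b) ∧
      ∀ a b : G, (a : ℝ) < (b : ℝ) → (φ a : ℝ) < (φ b : ℝ)) ↔
    ∀ X ∈ AInv G, ∃ Y ∈ AInv H, X ⊆ Y := by
  constructor
  · rintro ⟨φ, hadd, hmono⟩ X hX
    obtain ⟨r, hrG, hr, rfl⟩ := mem_AInv_iff_pos.mp hX
    let ψ : G →+ H := AddMonoidHom.mk' φ hadd
    have hψ : StrictMono ψ := fun a b hab => hmono a b hab
    have hψr : (0 : H) < ψ ⟨r, hrG⟩ := map_zero ψ ▸ hψ (show (0 : G) < ⟨r, hrG⟩ from hr)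
    exact ⟨_, mem_AInv_iff_pos.mpr ⟨_, (ψ ⟨r, hrG⟩).2, hψr, rfl⟩,
      divSet_subset_of_strictMono hψ (r := ⟨r, hrG⟩) hr⟩
  · intro hA
    obtain ⟨r, hrG, hr⟩ : ∃ r ∈ G, 0 < r := by
      obtain ⟨r, hr0⟩ := AddSubgroup.ne_bot_iff_exists_ne_zero.mp hG
      exact ⟨|r|, abs_mem_iff.mpr r.2, abs_pos.mpr (Subtype.coe_ne_coe.mpr hr0)⟩
    obtain ⟨Y, hY, hsub⟩ := hA _ (mem_AInv_iff_pos.mpr ⟨r, hrG, hr, rfl⟩)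
    obtain ⟨s, -, hs, rfl⟩ := mem_AInv_iff_pos.mp hY
    refine ⟨fun g => ⟨g * (s / r), mul_div_mem_of_divSet_subset hs.ne' hsub g.2⟩,
      fun a b => Subtype.ext (by push_cast; ring), fun a b hab => ?_⟩
    exact mul_lt_mul_of_pos_right hab (div_pos hs hr)

/-- There is a strictly order preserving group homomorphism `G → H` iff every
member of `A_G` is contained in a member of `A_H`. -/
theorem stmt_5 (G H : AddSubgroup ℝ) (hG : G ≠ ⊥) (hH : H ≠ ⊥) :
    (∃ φ : G → H, (∀ a b : G, φ (a + b) = φ a + φ b) ∧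
      ∀ a b : G, (a : ℝ) < (b : ℝ) → (φ a : ℝ) < (φ b : ℝ)) ↔
    ∀ X ∈ AInv G, ∃ Y ∈ AInv H, X ⊆ Y :=
  stmt_5_general G H hG
end

section
/- Let G and H be nontrivial subgroups of ℝ that are bi-embeddable as ordered groups (each order-embeds into the other) but not order isomorphic. Then for every X ∈ A_G there exists X' ∈ A_G with X strictly contained in X' (X ⊊ X'). -/
namespace AddMonoidHom

variable {G : AddSubgroup ℝ} {f : G →+ ℝ}

theorem ratCast_lt_div_iff_of_strictMono (hf : StrictMono f) {a : G} (ha : 0 < (a : ℝ))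
    (g : G) (q : ℚ) : (q : ℝ) < g / a ↔ (q : ℝ) < f g / f a := by
  have hfa : 0 < f a := by simpa using hf (show (0 : G) < a from ha)
  have hden : (0 : ℝ) < q.den := by positivity
  have key : q.num * (a : ℝ) < q.den * g ↔ q.num * f a < q.den * f g := by
    have hlt := hf.lt_iff_lt (a := q.num • a) (b := (q.den : ℤ) • g)
    simpa only [Subtype.mk_lt_mk, map_zsmul, AddSubgroup.coe_zsmul, zsmul_eq_mul,
      Int.cast_natCast, ← Subtype.coe_lt_coe] using hlt.symm
  rw [Rat.cast_def, div_lt_div_iff₀ hden ha, div_lt_div_iff₀ hden hfa, mul_comm (g : ℝ),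
    mul_comm (f g)]
  exact key

theorem exists_pos_forall_eq_mul_of_strictMono (hf : StrictMono f) :
    ∃ c > 0, ∀ g, f g = c * g := by
  by_cases hpos : ∃ a : G, 0 < (a : ℝ)
  · obtain ⟨a, ha⟩ := hpos
    have hfa : 0 < f a := by simpa using hf (show (0 : G) < a from ha)
    refine ⟨f a / a, div_pos hfa ha, fun g => ?_⟩
    have hratio := eq_of_forall_rat_lt_iff_lt (ratCast_lt_div_iff_of_strictMono hf ha g)
    field_simp at hratio ⊢
    linarith
  · refine ⟨1, one_pos, fun g => ?_⟩
    push Not at hpos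
    obtain rfl : g = 0 := Subtype.ext <| le_antisymm (hpos g) (by simpa using hpos (-g))
    simp

end AddMonoidHom

theorem exists_pos_forall_mul_mem_of_strictMono {G H : AddSubgroup ℝ} (φ : G → H)
    (hadd : ∀ a b : G, φ (a + b) = φ a + φ b)
    (hmono : ∀ a b : G, (a : ℝ) < (b : ℝ) → (φ a : ℝ) < (φ b : ℝ)) :
    ∃ c > 0, ∀ g ∈ G, c * g ∈ H := by
  obtain ⟨c, hc, hφ⟩ :=
    (H.subtype.comp (AddMonoidHom.mk' φ hadd)).exists_pos_forall_eq_mul_of_strictMono hmono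
  exact ⟨c, hc, fun g hg => hφ ⟨g, hg⟩ ▸ (φ ⟨g, hg⟩).2⟩

theorem exists_addEquiv_lt_iff_of_forall_mul_mem {G H : AddSubgroup ℝ} {d : ℝ} (hd : 0 < d)
    (hGH : ∀ g ∈ G, d⁻¹ * g ∈ H) (hHG : ∀ h ∈ H, d * h ∈ G) :
    ∃ f : G ≃+ H, ∀ x y : G, (x : ℝ) < y ↔ (f x : ℝ) < f y :=
  ⟨{ toFun := fun g => ⟨d⁻¹ * g, hGH g g.2⟩
     invFun := fun h => ⟨d * h, hHG h h.2⟩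
     left_inv := fun g => by ext; field_simp
     right_inv := fun h => by ext; field_simp
     map_add' := fun x y => by ext; push_cast; ring },
   fun x y => (mul_lt_mul_iff_of_pos_left (inv_pos.2 hd)).symm⟩

theorem divSet_ssubset_divSet_mul {G : AddSubgroup ℝ} {e r : ℝ} (he : e ≠ 0) (hr : r ≠ 0)
    (hmaps : ∀ g ∈ G, e * g ∈ G) (hnot : ∃ g ∈ G, ∀ g' ∈ G, g ≠ e * g') :
    divSet G r ⊂ divSet G (e * r) := by
  refine Set.ssubset_iff_subset_ne.2 ⟨?_, fun heq => ?_⟩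
  · rintro x ⟨g, hg, rfl⟩
    exact ⟨e * g, hmaps g hg, by field_simp⟩
  · obtain ⟨g₀, hg₀, hne⟩ := hnot
    obtain ⟨g, hg, hgeq⟩ : g₀ / (e * r) ∈ divSet G r := heq ▸ ⟨g₀, hg₀, rfl⟩
    exact hne g hg (by field_simp at hgeq; linarith)

theorem stmt_6_general (G H : AddSubgroup ℝ)
    (hGH : ∃ φ : G → H, (∀ a b : G, φ (a + b) = φ a + φ b) ∧
      ∀ a b : G, (a : ℝ) < (b : ℝ) → (φ a : ℝ) < (φ b : ℝ))
    (hHG : ∃ ψ : H → G, (∀ a b : H, ψ (a + b) = ψ a + ψ b) ∧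
      ∀ a b : H, (a : ℝ) < (b : ℝ) → (ψ a : ℝ) < (ψ b : ℝ))
    (hniso : ¬ ∃ f : G ≃+ H, ∀ x y : G, (x : ℝ) < (y : ℝ) ↔ (f x : ℝ) < (f y : ℝ)) :
    ∀ X ∈ AInv G, ∃ X' ∈ AInv G, X ⊂ X' := by
  rintro X ⟨r, hr, hr0, rfl⟩
  obtain ⟨φ, φadd, φmono⟩ := hGH
  obtain ⟨ψ, ψadd, ψmono⟩ := hHG
  obtain ⟨c, hc, hcGH⟩ := exists_pos_forall_mul_mem_of_strictMono φ φadd φmono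
  obtain ⟨d, hd, hdHG⟩ := exists_pos_forall_mul_mem_of_strictMono ψ ψadd ψmono
  have hmaps : ∀ g ∈ G, d * c * g ∈ G := fun g hg => mul_assoc d c g ▸ hdHG _ (hcGH g hg)
  have hnot : ∃ g ∈ G, ∀ g' ∈ G, g ≠ d * c * g' := by
    by_contra! hsurj
    refine hniso (exists_addEquiv_lt_iff_of_forall_mul_mem hd (fun g hg => ?_) hdHG)
    obtain ⟨g', hg', rfl⟩ := hsurj g hg
    rw [mul_assoc, inv_mul_cancel_left₀ hd.ne']
    exact hcGH g' hg'
  exact ⟨_, ⟨d * c * r, hmaps r hr, mul_ne_zero (by positivity) hr0, rfl⟩,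
    divSet_ssubset_divSet_mul (by positivity) hr0 hmaps hnot⟩

/-- If nontrivial `G, H ≤ ℝ` are bi-embeddable as ordered groups but not order
isomorphic, then every member of `A_G` is strictly contained in another member of `A_G`. -/
theorem stmt_6 (G H : AddSubgroup ℝ) (hG : G ≠ ⊥) (hH : H ≠ ⊥)
    (hGH : ∃ φ : G → H, (∀ a b : G, φ (a + b) = φ a + φ b) ∧
      ∀ a b : G, (a : ℝ) < (b : ℝ) → (φ a : ℝ) < (φ b : ℝ))
    (hHG : ∃ ψ : H → G, (∀ a b : H, ψ (a + b) = ψ a + ψ b) ∧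
      ∀ a b : H, (a : ℝ) < (b : ℝ) → (ψ a : ℝ) < (ψ b : ℝ))
    (hniso : ¬ ∃ f : G ≃+ H, ∀ x y : G, (x : ℝ) < (y : ℝ) ↔ (f x : ℝ) < (f y : ℝ)) :
    ∀ X ∈ AInv G, ∃ X' ∈ AInv G, X ⊂ X' :=
  stmt_6_general G H hGH hHG hniso
end

section
/- Let α, β be irrational reals. If the ordered additive groups span_ℚ{1, α} and span_ℚ{1, β} are order isomorphic, then α = (kβ + ℓ)/(mβ + n) for some rational numbers k, ℓ, m, n with mβ + n ≠ 0. Consequently, for fixed β there are only countably many irrational α with span_ℚ{1, α} order isomorphic to span_ℚ{1, β}. -/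
/-
An order isomorphism `f : span_ℚ{1, α} ≃ span_ℚ{1, β}` is multiplication by `λ = f 1 > 0`
(Hion's lemma): comparing `p • 1` with `q • α` for integers `p, q` shows that the rationals
below `α` are exactly those below `f α / f 1`. Writing `f 1 = mβ + n` and `f α = kβ + ℓ` gives
`α = (kβ + ℓ)/(mβ + n)`, so such `α` are indexed by `ℚ⁴`.
-/

/-- The `ℚ`-linear span of `{1, α}` inside `ℝ`, as an additive subgroup of `ℝ`. -/
noncomputable def spanQ (α : ℝ) : AddSubgroup ℝ :=
  (Submodule.span ℚ ({1, α} : Set ℝ)).toAddSubgroup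

lemma mem_spanQ_iff {α x : ℝ} : x ∈ spanQ α ↔ ∃ p q : ℚ, x = (p : ℝ) * α + q := by
  rw [spanQ, Submodule.mem_toAddSubgroup, Submodule.mem_span_pair]
  constructor
  · rintro ⟨a, b, rfl⟩
    exact ⟨b, a, by simp only [Rat.smul_def]; ring⟩
  · rintro ⟨p, q, rfl⟩
    exact ⟨q, p, by simp only [Rat.smul_def]; ring⟩

lemma one_mem_spanQ (α : ℝ) : (1 : ℝ) ∈ spanQ α :=
  mem_spanQ_iff.2 ⟨0, 1, by simp⟩

lemma self_mem_spanQ (α : ℝ) : α ∈ spanQ α :=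
  mem_spanQ_iff.2 ⟨1, 0, by simp⟩

lemma AddMonoidHom.apply_eq_mul_of_strictMono {G : AddSubgroup ℝ} (hG : (1 : ℝ) ∈ G)
    (f : G →+ ℝ) (hf : StrictMono f) (x : G) : f x = x * f ⟨1, hG⟩ := by
  set one : G := ⟨1, hG⟩
  have hpos : 0 < f one := by
    simpa using hf (show (0 : G) < one from zero_lt_one' ℝ)
  have hcut : ∀ q : ℚ, (q : ℝ) < x ↔ (q : ℝ) < f x / f one := by
    intro q
    have hden : (0 : ℝ) < q.den := by positivity
    have hzsmul : q.num • one < (q.den : ℤ) • x ↔ q.num • f one < (q.den : ℤ) • f x := by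
      rw [← map_zsmul, ← map_zsmul]
      exact hf.lt_iff_lt.symm
    rw [lt_div_iff₀ hpos, Rat.cast_def, div_lt_iff₀ hden, div_mul_eq_mul_div, div_lt_iff₀ hden]
    simpa [← Subtype.coe_lt_coe, one, zsmul_eq_mul, mul_comm] using hzsmul
  rw [← div_eq_iff hpos.ne']
  exact (eq_of_forall_rat_lt_iff_lt hcut).symm

lemma exists_eq_div_of_spanQ_orderIso {α β : ℝ} (f : spanQ α ≃+ spanQ β)
    (hf : ∀ x y : spanQ α, (x : ℝ) < (y : ℝ) ↔ (f x : ℝ) < (f y : ℝ)) :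
    ∃ k l m n : ℚ, (m : ℝ) * β + (n : ℝ) ≠ 0 ∧
      α = ((k : ℝ) * β + (l : ℝ)) / ((m : ℝ) * β + (n : ℝ)) := by
  set g : spanQ α →+ ℝ := (spanQ β).subtype.comp f.toAddMonoidHom
  have hg : StrictMono g := fun x y hxy => (hf x y).1 hxy
  have hg1 : 0 < g ⟨1, one_mem_spanQ α⟩ := by
    simpa using hg (show (0 : spanQ α) < ⟨1, one_mem_spanQ α⟩ from zero_lt_one' ℝ)
  have hgα := g.apply_eq_mul_of_strictMono (one_mem_spanQ α) hg ⟨α, self_mem_spanQ α⟩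
  obtain ⟨m, n, hmn⟩ := mem_spanQ_iff.1 (f ⟨1, one_mem_spanQ α⟩).2
  obtain ⟨k, l, hkl⟩ := mem_spanQ_iff.1 (f ⟨α, self_mem_spanQ α⟩).2
  refine ⟨k, l, m, n, hmn ▸ hg1.ne', ?_⟩
  rw [← hmn, ← hkl]
  exact eq_div_of_mul_eq hg1.ne' hgα.symm

theorem stmt_11_general (β : ℝ) :
    (∀ α : ℝ, Irrational α →
      (∃ f : spanQ α ≃+ spanQ β,
        ∀ x y : spanQ α, (x : ℝ) < (y : ℝ) ↔ (f x : ℝ) < (f y : ℝ)) →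
      ∃ k l m n : ℚ, (m : ℝ) * β + (n : ℝ) ≠ 0 ∧
        α = ((k : ℝ) * β + (l : ℝ)) / ((m : ℝ) * β + (n : ℝ))) ∧
    Set.Countable {α : ℝ | Irrational α ∧
      ∃ f : spanQ α ≃+ spanQ β,
        ∀ x y : spanQ α, (x : ℝ) < (y : ℝ) ↔ (f x : ℝ) < (f y : ℝ)} := by
  refine ⟨fun α _ ⟨f, hf⟩ => exists_eq_div_of_spanQ_orderIso f hf, ?_⟩
  refine (Set.countable_range fun t : ℚ × ℚ × ℚ × ℚ =>
    ((t.1 : ℝ) * β + t.2.1) / ((t.2.2.1 : ℝ) * β + t.2.2.2)).mono ?_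
  rintro α ⟨-, f, hf⟩
  obtain ⟨k, l, m, n, -, hα⟩ := exists_eq_div_of_spanQ_orderIso f hf
  exact ⟨(k, l, m, n), hα.symm⟩

/-- If `span_ℚ{1, α}` and `span_ℚ{1, β}` are order isomorphic (α, β irrational) then
`α = (kβ + ℓ)/(mβ + n)` for some rationals; consequently for fixed `β` there are only
countably many such irrational `α`. -/
theorem stmt_11 (β : ℝ) (hβ : Irrational β) :
    (∀ α : ℝ, Irrational α →
      (∃ f : spanQ α ≃+ spanQ β,
        ∀ x y : spanQ α, (x : ℝ) < (y : ℝ) ↔ (f x : ℝ) < (f y : ℝ)) →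
      ∃ k l m n : ℚ, (m : ℝ) * β + (n : ℝ) ≠ 0 ∧
        α = ((k : ℝ) * β + (l : ℝ)) / ((m : ℝ) * β + (n : ℝ))) ∧
    Set.Countable {α : ℝ | Irrational α ∧
      ∃ f : spanQ α ≃+ spanQ β,
        ∀ x y : spanQ α, (x : ℝ) < (y : ℝ) ↔ (f x : ℝ) < (f y : ℝ)} :=
  stmt_11_general β
end

section
/- Let T ⊆ ℝ be a set of reals that is algebraically independent over ℚ, and let S, S' ⊆ T. If the subfields ℚ(S) and ℚ(S') generated by S and S' in ℝ are equal, then S = S'. Consequently, if S ≠ S' then the ordered additive groups ℚ(S) and ℚ(S') are not order isomorphic. -/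
/-!
An element `a ∈ T \ S` is transcendental over `ℚ(S)`, so it does not lie in `ℚ(S)`; hence
`ℚ(S) = ℚ(S')` forces `S = S'`. An order-preserving additive isomorphism `f : K ≃+ K'` between
subfields of an Archimedean field is `ℚ`-linear and monotone, hence multiplication by `c = f 1`
by density of `ℚ`. Then `c ∈ K'`, and `c² ∈ K' = c K` gives `c ∈ K`, so `K = K'`.
-/

namespace AlgebraicIndependent

variable {K L : Type*} [Field K] [Field L] [Algebra K L] {T S : Set L}

theorem notMem_intermediateFieldAdjoin (hT : AlgebraicIndependent K ((↑) : T → L))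
    (hS : S ⊆ T) {a : L} (haT : a ∈ T) (haS : a ∉ S) :
    a ∉ IntermediateField.adjoin K S := by
  have himage : ((↑) : T → L) '' ((↑) ⁻¹' S) = S :=
    Set.image_preimage_eq_of_subset (by rwa [Subtype.range_coe])
  have htr := hT.transcendental_adjoin (s := (↑) ⁻¹' S) (i := ⟨a, haT⟩) (by exact haS)
  rw [himage, ← IntermediateField.transcendental_adjoin_iff] at htr
  exact fun ha => htr (isAlgebraic_algebraMap (⟨a, ha⟩ : IntermediateField.adjoin K S))

theorem notMem_subfieldClosure (hT : AlgebraicIndependent K ((↑) : T → L))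
    (hS : S ⊆ T) {a : L} (haT : a ∈ T) (haS : a ∉ S) : a ∉ Subfield.closure S :=
  fun ha => hT.notMem_intermediateFieldAdjoin hS haT haS <|
    Subfield.closure_le.mpr (IntermediateField.subset_adjoin K S) ha

theorem subset_of_subfieldClosure_le (hT : AlgebraicIndependent K ((↑) : T → L))
    {S' : Set L} (hS : S ⊆ T) (hS' : S' ⊆ T) (h : Subfield.closure S ≤ Subfield.closure S') :
    S ⊆ S' := fun _ ha =>
  by_contra fun haS' => hT.notMem_subfieldClosure hS' (hS ha) haS' (h (Subfield.subset_closure ha))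

theorem eq_of_subfieldClosure_eq (hT : AlgebraicIndependent K ((↑) : T → L))
    {S' : Set L} (hS : S ⊆ T) (hS' : S' ⊆ T) (h : Subfield.closure S = Subfield.closure S') :
    S = S' :=
  (hT.subset_of_subfieldClosure_le hS hS' h.le).antisymm
    (hT.subset_of_subfieldClosure_le hS' hS h.ge)

end AlgebraicIndependent

section Archimedean

variable {F : Type*} [Field F] [LinearOrder F] [IsStrictOrderedRing F] [Archimedean F]

theorem Subfield.apply_eq_apply_one_mul_of_strictMono {K : Subfield F} (f : K →+ F)
    (hf : ∀ x y : K, (x : F) < y → f x < f y) (z : K) : f z = f 1 * z := by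
  have hc : 0 < f 1 := by simpa using hf 0 1 zero_lt_one
  have hrat (r : ℚ) : f r = r * f 1 := by
    rw [← Rat.smul_one_eq_cast, map_rat_smul, Rat.smul_def]
  -- applying the upper bound to `-z` gives the lower bound
  suffices hle : ∀ z : K, f z ≤ f 1 * z by
    have := hle (-z)
    simp only [map_neg, Subfield.coe_neg, mul_neg, neg_le_neg_iff] at this
    exact (hle z).antisymm this
  intro z
  by_contra! hlt
  obtain ⟨r, hzr, hrf⟩ := exists_rat_btwn ((lt_div_iff₀' hc).mpr hlt)
  have := hf z r (by simpa using hzr)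
  rw [hrat] at this
  linarith [(lt_div_iff₀ hc).mp hrf]

theorem Subfield.eq_of_addEquiv_of_strictMono {K K' : Subfield F} (f : K ≃+ K')
    (hf : ∀ x y : K, (x : F) < y → (f x : F) < f y) : K = K' := by
  set c : F := (f 1 : F)
  have hlin (z : K) : (f z : F) = c * z :=
    apply_eq_apply_one_mul_of_strictMono (K'.subtype.toAddMonoidHom.comp f.toAddMonoidHom) hf z
  have hc : c ≠ 0 := (by simpa using hf 0 1 zero_lt_one : (0 : F) < c).ne'
  have hcK' : c ∈ K' := (f 1).2
  have hcK : c ∈ K := by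
    have h := hlin (f.symm ⟨c * c, mul_mem hcK' hcK'⟩)
    rw [AddEquiv.apply_symm_apply] at h
    exact mul_left_cancel₀ hc h ▸ (f.symm _).2
  refine le_antisymm (fun a ha => ?_) (fun a ha => ?_)
  · have h := hlin ⟨c⁻¹ * a, mul_mem (inv_mem hcK) ha⟩
    rw [← mul_assoc, mul_inv_cancel₀ hc, one_mul] at h
    exact h ▸ (f _).2
  · have h := hlin (f.symm ⟨a, ha⟩)
    rw [AddEquiv.apply_symm_apply] at h
    rw [show a = _ from h]
    exact mul_mem hcK (f.symm _).2

end Archimedean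

/-- If `T ⊆ ℝ` is algebraically independent over `ℚ` and `S, S' ⊆ T` generate the same
subfield of `ℝ`, then `S = S'`; consequently if `S ≠ S'` then the generated subfields
are not order isomorphic as ordered additive groups. -/
theorem stmt_13 (T : Set ℝ) (hT : AlgebraicIndependent ℚ ((↑) : T → ℝ))
    (S S' : Set ℝ) (hS : S ⊆ T) (hS' : S' ⊆ T) :
    (Subfield.closure S = Subfield.closure S' → S = S') ∧
    (S ≠ S' → ¬ ∃ f : Subfield.closure S ≃+ Subfield.closure S',
      ∀ x y : Subfield.closure S, (x : ℝ) < (y : ℝ) ↔ (f x : ℝ) < (f y : ℝ)) := by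
  refine ⟨hT.eq_of_subfieldClosure_eq hS hS', ?_⟩
  rintro hne ⟨f, hf⟩
  exact hne <| hT.eq_of_subfieldClosure_eq hS hS' <|
    Subfield.eq_of_addEquiv_of_strictMono f fun x y => (hf x y).mp
end
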